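/- Let γ(t) = U(t)Σ(t)V(t)* be a smooth path of n×m matrices with U(t) unitary n×n, V(t) unitary m×m, and Σ(t) real 'diagonal' (zero off the main diagonal) with real diagonal entries. Then ‖γ̇(t)‖_F² = ‖Σ̇(t)‖_F² + ‖A(t)Σ(t) − Σ(t)B(t)‖_F², where A = U*U̇ and B = V*V̇ are skew-Hermitian; in particular ‖γ̇(t)‖_F ≥ ‖Σ̇(t)‖_F. -/

import Mathlib

open scoped BigOperators
open Matrix

attribute [local instance] Matrix.frobeniusNormedAddCommGroup Matrix.frobeniusNormedSpace

/-- The Frobenius norm of a matrix. -/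
noncomputable def frobNorm {n m : ℕ} (A : Matrix (Fin n) (Fin m) ℂ) : ℝ :=
  Real.sqrt (∑ i, ∑ j, ‖A i j‖ ^ 2)

/-!
By the product rule, `γ̇ = U (Ẇ + A W - W B) Vᴴ` with `A = UᴴU̇` and `B = VᴴV̇`, which are
skew-Hermitian since `UᴴU = 1` and `VᴴV = 1` are constant. The Frobenius norm is unitarily
invariant, and `Ẇ` is orthogonal to `A W - W B`: `Ẇ` is real and lives on the diagonal, where
`A W - W B` has the entries `(a_ii - b_ii) w_ii`, purely imaginary because `w_ii` is real and the
diagonal entries of skew-Hermitian matrices are purely imaginary.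
-/

section Derivatives

variable {𝕜 : Type*} [NontriviallyNormedField 𝕜] {t : 𝕜}

theorem HasDerivAt.map_eq_zero_of_forall {E G : Type*} [NormedAddCommGroup E] [NormedSpace 𝕜 E]
    [NormedAddCommGroup G] [NormedSpace 𝕜 G] {F : 𝕜 → E} {F' : E} (L : E →L[𝕜] G)
    (hF : HasDerivAt F F' t) (h : ∀ s, L (F s) = 0) : L F' = 0 := by
  have hL : HasDerivAt (fun s => L (F s)) (L F') t := L.hasFDerivAt.comp_hasDerivAt t hF
  simp only [h] at hL
  exact hL.unique (hasDerivAt_const t 0)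

variable {α : Type*} [RCLike α] [NormedAlgebra 𝕜 α] {l m n : Type*} [Fintype l] [Fintype m]
  [Fintype n]

theorem HasDerivAt.matrix_mul {A : 𝕜 → Matrix l m α} {B : 𝕜 → Matrix m n α} {A' : Matrix l m α}
    {B' : Matrix m n α} (hA : HasDerivAt A A' t) (hB : HasDerivAt B B' t) :
    HasDerivAt (fun s => A s * B s) (A' * B t + A t * B') t := by
  let mul : Matrix l m α →L[𝕜] Matrix m n α →L[𝕜] Matrix l n α :=
    (LinearMap.mk₂ 𝕜 (· * ·) Matrix.add_mul (fun c A B => Matrix.smul_mul c A B) Matrix.mul_add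
      (fun c A B => Matrix.mul_smul A c B)).mkContinuous₂ 1 fun A B => by
        simpa using frobenius_norm_mul A B
  rw [add_comm]
  exact mul.hasDerivAt_of_bilinear (fun _ => hA) (fun _ => hB)

end Derivatives

theorem conjTranspose_mul_deriv_eq_neg {α m : Type*} [RCLike α] [Fintype m] [DecidableEq m]
    {U : ℝ → Matrix m m α} {U' : Matrix m m α} {t : ℝ}
    (hU : ∀ s, U s * (U s)ᴴ = 1) (hdU : HasDerivAt U U' t) :
    ((U t)ᴴ * U')ᴴ = -((U t)ᴴ * U') := by
  have hUu : ∀ s, (U s)ᴴ * U s = 1 := fun s => mul_eq_one_comm.mp (hU s)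
  have hd : HasDerivAt (fun s => (U s)ᴴ * U s) (U'ᴴ * U t + (U t)ᴴ * U') t :=
    hdU.star.matrix_mul hdU
  simp only [hUu] at hd
  rw [conjTranspose_mul, conjTranspose_conjTranspose, ← add_eq_zero_iff_eq_neg]
  exact hd.unique (hasDerivAt_const t 1)

theorem hasDerivAt_mul_mul_conjTranspose_of_unitary {α l m : Type*} [RCLike α] [Fintype l]
    [DecidableEq l] [Fintype m] [DecidableEq m] {U : ℝ → Matrix l l α} {V : ℝ → Matrix m m α}
    {W : ℝ → Matrix l m α} {U' : Matrix l l α} {V' : Matrix m m α} {W' : Matrix l m α} {t : ℝ}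
    (hU : ∀ s, U s * (U s)ᴴ = 1) (hV : ∀ s, V s * (V s)ᴴ = 1)
    (hdU : HasDerivAt U U' t) (hdV : HasDerivAt V V' t) (hdW : HasDerivAt W W' t) :
    HasDerivAt (fun s => U s * W s * (V s)ᴴ)
      (U t * (W' + ((U t)ᴴ * U' * W t - W t * ((V t)ᴴ * V'))) * (V t)ᴴ) t := by
  have hd := (hdU.matrix_mul hdW).matrix_mul hdV.star
  simp only [star_eq_conjTranspose] at hd
  convert hd using 1
  have hB := conjTranspose_mul_deriv_eq_neg hV hdV
  have hU' : U' = U t * ((U t)ᴴ * U') := by rw [← Matrix.mul_assoc, hU, Matrix.one_mul]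
  have hV' : V'ᴴ = -((V t)ᴴ * V') * (V t)ᴴ := by
    rw [← hB, conjTranspose_mul, conjTranspose_conjTranspose, Matrix.mul_assoc, hV,
      Matrix.mul_one]
  rw [hV']
  nth_rewrite 2 [hU']
  simp only [Matrix.mul_add, Matrix.add_mul, Matrix.mul_sub, Matrix.sub_mul, Matrix.mul_neg,
    Matrix.neg_mul, Matrix.mul_assoc]
  abel

namespace Matrix

theorem re_diag_eq_zero_of_conjTranspose_eq_neg {ι : Type*} {A : Matrix ι ι ℂ} (hA : Aᴴ = -A)
    (i : ι) : (A i i).re = 0 := by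
  have h := congrArg Complex.re (congrFun (congrFun hA i) i)
  simp only [conjTranspose_apply, neg_apply, Complex.star_def, Complex.conj_re,
    Complex.neg_re] at h
  linarith

variable {n m : ℕ}

def IsRectDiagonal {R : Type*} [Zero R] (D : Matrix (Fin n) (Fin m) R) : Prop :=
  ∀ (i : Fin n) (j : Fin m), (i : ℕ) ≠ j → D i j = 0

namespace IsRectDiagonal

section Semiring

variable {R : Type*} [NonUnitalNonAssocSemiring R] {D : Matrix (Fin n) (Fin m) R}

theorem mul_apply_of_val_eq (hD : D.IsRectDiagonal) (A : Matrix (Fin n) (Fin n) R)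
    {i : Fin n} {j : Fin m} (hij : (i : ℕ) = j) : (A * D) i j = A i i * D i j := by
  rw [mul_apply]
  refine Finset.sum_eq_single i (fun k _ hk => ?_) (by simp)
  rw [hD k j fun hkj => hk (Fin.ext (hkj.trans hij.symm)), mul_zero]

theorem apply_mul_of_val_eq (hD : D.IsRectDiagonal) (B : Matrix (Fin m) (Fin m) R)
    {i : Fin n} {j : Fin m} (hij : (i : ℕ) = j) : (D * B) i j = D i j * B j j := by
  rw [mul_apply]
  refine Finset.sum_eq_single j (fun k _ hk => ?_) (by simp)
  rw [hD i k fun hik => hk (Fin.ext (hik.symm.trans hij)), zero_mul]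

end Semiring

variable {D : Matrix (Fin n) (Fin m) ℂ}

theorem re_mul_sub_mul_apply_eq_zero (hD : D.IsRectDiagonal) (hDre : ∀ i j, (D i j).im = 0)
    {A : Matrix (Fin n) (Fin n) ℂ} {B : Matrix (Fin m) (Fin m) ℂ} (hA : Aᴴ = -A) (hB : Bᴴ = -B)
    {i : Fin n} {j : Fin m} (hij : (i : ℕ) = j) : ((A * D - D * B) i j).re = 0 := by
  rw [sub_apply, hD.mul_apply_of_val_eq A hij, hD.apply_mul_of_val_eq B hij]
  simp [Complex.mul_re, hDre i j, re_diag_eq_zero_of_conjTranspose_eq_neg hA,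
    re_diag_eq_zero_of_conjTranspose_eq_neg hB]

theorem re_mul_conj_eq_zero (hD : D.IsRectDiagonal) (hDre : ∀ i j, (D i j).im = 0)
    {C : Matrix (Fin n) (Fin m) ℂ} (hC : ∀ (i : Fin n) (j : Fin m), (i : ℕ) = j → (C i j).re = 0)
    (i : Fin n) (j : Fin m) : (D i j * (starRingEnd ℂ) (C i j)).re = 0 := by
  by_cases hij : (i : ℕ) = j
  · simp [Complex.mul_re, hDre i j, hC i j hij]
  · simp [hD i j hij]

end IsRectDiagonal

end Matrix

theorem frobNorm_nonneg {n m : ℕ} (A : Matrix (Fin n) (Fin m) ℂ) : 0 ≤ frobNorm A :=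
  Real.sqrt_nonneg _

theorem frobNorm_sq {n m : ℕ} (A : Matrix (Fin n) (Fin m) ℂ) :
    frobNorm A ^ 2 = ∑ i, ∑ j, Complex.normSq (A i j) := by
  simp only [frobNorm, ← Complex.sq_norm]
  exact Real.sq_sqrt (by positivity)

theorem frobNorm_sq_eq_re_trace {n m : ℕ} (A : Matrix (Fin n) (Fin m) ℂ) :
    frobNorm A ^ 2 = (Aᴴ * A).trace.re := by
  simp only [frobNorm_sq, trace, diag_apply, mul_apply, conjTranspose_apply, Complex.re_sum,
    Complex.star_def, ← Complex.normSq_eq_conj_mul_self, Complex.ofReal_re]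
  exact Finset.sum_comm

theorem frobNorm_mul_mul_conjTranspose {n m : ℕ} {P : Matrix (Fin n) (Fin n) ℂ}
    {Q : Matrix (Fin m) (Fin m) ℂ} (hP : Pᴴ * P = 1) (hQ : Qᴴ * Q = 1)
    (X : Matrix (Fin n) (Fin m) ℂ) : frobNorm (P * X * Qᴴ) = frobNorm X := by
  rw [← sq_eq_sq₀ (frobNorm_nonneg _) (frobNorm_nonneg _), frobNorm_sq_eq_re_trace,
    frobNorm_sq_eq_re_trace, conjTranspose_mul, conjTranspose_mul, conjTranspose_conjTranspose]
  congr 1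
  calc (Q * (Xᴴ * Pᴴ) * (P * X * Qᴴ)).trace = (Q * (Xᴴ * X * Qᴴ)).trace := by
        simp only [Matrix.mul_assoc, ← Matrix.mul_assoc Pᴴ P, hP, Matrix.one_mul]
    _ = (Xᴴ * X).trace := by rw [trace_mul_comm, Matrix.mul_assoc, hQ, Matrix.mul_one]

theorem frobNorm_add_sq_of_re_mul_conj_eq_zero {n m : ℕ} {X Y : Matrix (Fin n) (Fin m) ℂ}
    (h : ∀ i j, (X i j * (starRingEnd ℂ) (Y i j)).re = 0) :
    frobNorm (X + Y) ^ 2 = frobNorm X ^ 2 + frobNorm Y ^ 2 := by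
  simp only [frobNorm_sq, Matrix.add_apply, Complex.normSq_add, h, mul_zero, add_zero,
    ← Finset.sum_add_distrib]

/-- For a smooth path `γ(t) = U(t) W(t) V(t)ᴴ` with `U`, `V` unitary and `W` real diagonal,
`‖γ̇‖_F² = ‖Ẇ‖_F² + ‖AW − WB‖_F²` where `A = UᴴU̇`, `B = VᴴV̇`; in particular
`‖γ̇‖_F ≥ ‖Ẇ‖_F`. -/
theorem frob_deriv_svd_path {n m : ℕ}
    (U : ℝ → Matrix (Fin n) (Fin n) ℂ) (V : ℝ → Matrix (Fin m) (Fin m) ℂ)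
    (W : ℝ → Matrix (Fin n) (Fin m) ℂ)
    (U' : Matrix (Fin n) (Fin n) ℂ) (V' : Matrix (Fin m) (Fin m) ℂ)
    (W' g' : Matrix (Fin n) (Fin m) ℂ) (t : ℝ)
    (hU : ∀ s, U s * (U s)ᴴ = 1) (hV : ∀ s, V s * (V s)ᴴ = 1)
    (hWdiag : ∀ s (i : Fin n) (j : Fin m), (i : ℕ) ≠ (j : ℕ) → W s i j = 0)
    (hWreal : ∀ s (i : Fin n) (j : Fin m), (W s i j).im = 0)
    (hdU : HasDerivAt U U' t) (hdV : HasDerivAt V V' t) (hdW : HasDerivAt W W' t)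
    (hdγ : HasDerivAt (fun s => U s * W s * (V s)ᴴ) g' t) :
    frobNorm g' ^ 2 =
        frobNorm W' ^ 2 +
          frobNorm ((U t)ᴴ * U' * W t - W t * ((V t)ᴴ * V')) ^ 2 ∧
      frobNorm W' ≤ frobNorm g' := by
  have hg := hdγ.unique (hasDerivAt_mul_mul_conjTranspose_of_unitary hU hV hdU hdV hdW)
  let entry (i : Fin n) (j : Fin m) := (entryLinearMap ℝ ℂ i j).toContinuousLinearMap
  have hW'diag : W'.IsRectDiagonal := fun i j hij =>
    hdW.map_eq_zero_of_forall (entry i j) fun s => hWdiag s i j hij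
  have hW'real : ∀ i j, (W' i j).im = 0 := fun i j =>
    hdW.map_eq_zero_of_forall (Complex.imCLM.comp (entry i j)) fun s => hWreal s i j
  have hA := conjTranspose_mul_deriv_eq_neg hU hdU
  have hB := conjTranspose_mul_deriv_eq_neg hV hdV
  have hpyth : frobNorm g' ^ 2 = frobNorm W' ^ 2 +
      frobNorm ((U t)ᴴ * U' * W t - W t * ((V t)ᴴ * V')) ^ 2 := by
    rw [hg, frobNorm_mul_mul_conjTranspose (mul_eq_one_comm.mp (hU t))
      (mul_eq_one_comm.mp (hV t)), frobNorm_add_sq_of_re_mul_conj_eq_zero]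
    exact hW'diag.re_mul_conj_eq_zero hW'real fun i j hij =>
      IsRectDiagonal.re_mul_sub_mul_apply_eq_zero (hWdiag t) (hWreal t) hA hB hij
  refine ⟨hpyth, (sq_le_sq₀ (frobNorm_nonneg _) (frobNorm_nonneg _)).mp ?_⟩
  rw [hpyth]
  exact le_add_of_nonneg_right (sq_nonneg _)
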